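/- In ℝ[x_1,x_2,x_3,x_4], let U = (1, Σ_{i=1}^4 x_i, Σ_{i=1}^4 x_i², Σ_{1≤i<j≤4} x_ix_j)^T and let Q be the 4×4 rational matrix (1/24)·[[1,-1,-1,2],[-1,2,0,-2],[-1,0,2,-2],[2,-2,-2,4]]. Then the exact polynomial identity U^T (24·Q) U = (1 - Σ_{i=1}^4 x_i - Σ_{i=1}^4 x_i² + 2Σ_{1≤i<j≤4} x_ix_j)² + (Σ_{i=1}^4 x_i² - Σ_{i=1}^4 x_i)² holds; in particular U^T (24·Q) U is a sum of two squares. -/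

import Mathlib

/-!
Writing `r₁ = (1, -1, -1, 2)` and `r₂ = (0, -1, 1, 0)`, the matrix `24 • Qmat` is the rank-two
Gram matrix `r₁ r₁ᵀ + r₂ r₂ᵀ`, so its quadratic form at `U` is `(r₁ ⬝ U)² + (r₂ ⬝ U)²`; with
`U = (1, s, t, p)` these linear forms are `1 - s - t + 2p` and `t - s`.
-/

open MvPolynomial

/-- The representative vector `U = (1, Σ x_i, Σ x_i², Σ_{i<j} x_i x_j)` for the trivial
`S₄`-block. -/
noncomputable def Uvec : Fin 4 → MvPolynomial (Fin 4) ℝ :=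
  ![1, ∑ i : Fin 4, X i, ∑ i : Fin 4, (X i) ^ 2,
    ∑ i : Fin 4, ∑ j ∈ Finset.Ioi i, X i * X j]

/-- The Gram matrix `Q_{(4)}` of the trivial `S₄`-block. -/
noncomputable def Qmat : Matrix (Fin 4) (Fin 4) ℝ :=
  (1 / 24 : ℝ) • !![1, -1, -1, 2; -1, 2, 0, -2; -1, 0, 2, -2; 2, -2, -2, 4]

theorem sum_sum_map_add_mul_mul_eq_sq_add_sq {ι R S : Type*} [Fintype ι] [CommSemiring R]
    [CommSemiring S] (f : R →+* S) (v w : ι → R) (u : ι → S) :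
    ∑ a, ∑ b, f (v a * v b + w a * w b) * u a * u b =
      (∑ a, f (v a) * u a) ^ 2 + (∑ a, f (w a) * u a) ^ 2 := by
  simp only [sq, Finset.sum_mul_sum, ← Finset.sum_add_distrib]
  refine Finset.sum_congr rfl fun a _ => Finset.sum_congr rfl fun b _ => ?_
  simp only [map_add, map_mul]
  ring

theorem twentyfour_mul_Qmat_apply (a b : Fin 4) :
    24 * Qmat a b =
      ![1, -1, -1, 2] a * ![1, -1, -1, 2] b + ![0, -1, 1, 0] a * ![0, -1, 1, 0] b := by
  fin_cases a <;> fin_cases b <;> norm_num [Qmat]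

section LinearForms

variable {R S : Type*} [Ring R] [CommRing S] (f : R →+* S) (s t p : S)

theorem sum_map_vec_one_neg_one_neg_one_two_mul :
    ∑ a, f (![1, -1, -1, 2] a) * ![1, s, t, p] a = 1 - s - t + 2 * p := by
  simp only [Fin.sum_univ_four, Matrix.cons_val_zero, Matrix.cons_val_one, Matrix.cons_val,
    map_one, map_neg, map_ofNat]
  ring

theorem sum_map_vec_zero_neg_one_one_zero_mul :
    ∑ a, f (![0, -1, 1, 0] a) * ![1, s, t, p] a = t - s := by
  simp only [Fin.sum_univ_four, Matrix.cons_val_zero, Matrix.cons_val_one, Matrix.cons_val,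
    map_zero, map_one, map_neg]
  ring

end LinearForms

theorem trivial_block_factorization :
    (∑ a : Fin 4, ∑ b : Fin 4, C ((24 : ℝ) * Qmat a b) * Uvec a * Uvec b) =
      (1 - (∑ i : Fin 4, X i) - (∑ i : Fin 4, (X i) ^ 2)
          + 2 * ∑ i : Fin 4, ∑ j ∈ Finset.Ioi i, X i * X j) ^ 2
        + ((∑ i : Fin 4, (X i) ^ 2) - ∑ i : Fin 4, X i) ^ 2 := by
  simp only [twentyfour_mul_Qmat_apply]
  rw [sum_sum_map_add_mul_mul_eq_sq_add_sq, Uvec, sum_map_vec_one_neg_one_neg_one_two_mul,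
    sum_map_vec_zero_neg_one_one_zero_mul]
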